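/- arXiv:2303.14812 — 2 statements merged into one kernel-verified Lean document; each statement's English description precedes it below -/
import Mathlib

section
/- The curvilinear sum along the first axis of two n-dimensional partitions is again an n-dimensional partition, i.e. it is a downward-closed finite subset of ℤ_{≥0}^n. -/
variable {ι : Type*}

/-- Length of `A` along the first axis over the slice `i`. -/
noncomputable def sliceLen (A : Set (ℕ × (ι → ℕ))) (i : ι → ℕ) : ℕ :=
  Set.ncard {m : ℕ | (m, i) ∈ A}

/-- The (curvilinear) sum of two partitions along the first axis. -/
noncomputable def addSlice (A B : Set (ℕ × (ι → ℕ))) : Set (ℕ × (ι → ℕ)) :=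
  {p | p.1 < sliceLen A p.2 + sliceLen B p.2}

/-- An `n`-dimensional partition: a finite, downward closed set of boxes. -/
def IsPartition (A : Set (ℕ × (ι → ℕ))) : Prop :=
  A.Finite ∧ ∀ p ∈ A, ∀ q : ℕ × (ι → ℕ), q ≤ p → q ∈ A

/-- The curvilinear sum along the first axis of two `n`-dimensional partitions is
again an `n`-dimensional partition (finite and downward closed). -/
theorem isPartition_addSlice (A B : Set (ℕ × (ι → ℕ)))
    (hA : IsPartition A) (hB : IsPartition B) :
    IsPartition (addSlice A B) := by
  obtain ⟨hAfin, hAdc⟩ := hA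
  obtain ⟨hBfin, hBdc⟩ := hB
  -- slices are finite
  have hsl : ∀ (C : Set (ℕ × (ι → ℕ))), C.Finite → ∀ i : ι → ℕ,
      {m : ℕ | (m, i) ∈ C}.Finite := by
    intro C hC i
    have : {m : ℕ | (m, i) ∈ C} = (fun m : ℕ => (m, i)) ⁻¹' C := rfl
    rw [this]
    exact hC.preimage (fun x _ y _ h => by simpa using congrArg Prod.fst h)
  -- slice lengths bounded by cardinality
  have hbound : ∀ (C : Set (ℕ × (ι → ℕ))), C.Finite → ∀ i : ι → ℕ,
      sliceLen C i ≤ C.ncard := by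
    intro C hC i
    have hinj : Function.Injective (fun m : ℕ => (m, i)) := by
      intro a b h; simpa using congrArg Prod.fst h
    calc sliceLen C i = ((fun m : ℕ => (m, i)) '' {m : ℕ | (m, i) ∈ C}).ncard :=
          (Set.ncard_image_of_injective _ hinj).symm
      _ ≤ C.ncard := by
          apply Set.ncard_le_ncard _ hC
          rintro p ⟨m, hm, rfl⟩; exact hm
  -- monotonicity of slice lengths
  have hmono : ∀ (C : Set (ℕ × (ι → ℕ))), C.Finite →
      (∀ p ∈ C, ∀ q : ℕ × (ι → ℕ), q ≤ p → q ∈ C) →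
      ∀ i j : ι → ℕ, j ≤ i → sliceLen C i ≤ sliceLen C j := by
    intro C hC hdc i j hji
    apply Set.ncard_le_ncard _ (hsl C hC j)
    intro m hm
    exact hdc _ hm (m, j) ⟨le_refl m, hji⟩
  constructor
  · -- finiteness
    apply Set.Finite.subset
      (((Set.finite_Iio (A.ncard + B.ncard)).prod
        ((hAfin.union hBfin).image Prod.snd)))
    intro p hp
    have hp' : p.1 < sliceLen A p.2 + sliceLen B p.2 := hp
    constructor
    · exact lt_of_lt_of_le hp'
        (Nat.add_le_add (hbound A hAfin p.2) (hbound B hBfin p.2))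
    · have hpos : 0 < sliceLen A p.2 + sliceLen B p.2 := Nat.pos_of_ne_zero (by omega)
      rcases Nat.add_pos_iff_pos_or_pos.mp hpos with h | h
      · obtain ⟨m, hm⟩ := Set.nonempty_of_ncard_ne_zero h.ne'
        exact ⟨(m, p.2), Or.inl hm, rfl⟩
      · obtain ⟨m, hm⟩ := Set.nonempty_of_ncard_ne_zero h.ne'
        exact ⟨(m, p.2), Or.inr hm, rfl⟩
  · -- downward closed
    intro p hp q hq
    have hp' : p.1 < sliceLen A p.2 + sliceLen B p.2 := hp
    have : q.1 < sliceLen A q.2 + sliceLen B q.2 :=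
      lt_of_le_of_lt hq.1 (lt_of_lt_of_le hp'
        (Nat.add_le_add (hmono A hAfin hAdc p.2 q.2 hq.2) (hmono B hBfin hBdc p.2 q.2 hq.2)))
    exact this
end

section
/- One-variable jet uniqueness up to reparametrization: let Ψ: ℂ^n → ℂ^N be a map germ (given by its k-jet) whose linear part Ψ¹ has one-dimensional kernel, and let γ(t) = v₁t + … + v_k t^k, δ(t) = w₁t + … + w_k t^k be regular curve jets (v₁ ≠ 0 ≠ w₁) with (Ψ∘γ)_k = (Ψ∘δ)_k = 0. Then there exists a regular reparametrization jet Δ(t) = c₁t + … + c_k t^k with c₁ ≠ 0 such that γ = δ ∘ Δ modulo t^{k+1}. -/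
open Polynomial

lemma coeff_mul_of_Xpow_dvd (p q : ℂ[X]) (m : ℕ) (h : (X:ℂ[X])^m ∣ q) :
    (p * q).coeff m = p.coeff 0 * q.coeff m := by
  obtain ⟨r, rfl⟩ := h
  have h1 : p * (X ^ m * r) = X ^ m * (p * r) := by ring
  rw [h1]
  have h2 : (X ^ m * (p * r) : ℂ[X]).coeff (0 + m) = (p * r).coeff 0 :=
    coeff_X_pow_mul _ _ _
  have h3 : ((X:ℂ[X]) ^ m * r).coeff (0 + m) = r.coeff 0 := coeff_X_pow_mul _ _ _
  simp only [zero_add] at h2 h3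
  rw [h2, h3, mul_coeff_zero]

lemma aeval_coeff_zero {σ : Type*} (γ : σ → ℂ[X]) (h0 : ∀ j, (γ j).coeff 0 = 0)
    (P : MvPolynomial σ ℂ) :
    ((MvPolynomial.aeval γ) P).coeff 0 = MvPolynomial.coeff 0 P := by
  have this : (Polynomial.aeval (0:ℂ)) ((MvPolynomial.aeval γ) P)
      = (MvPolynomial.aeval fun i => (Polynomial.aeval (0:ℂ)) (γ i)) P := by
    have hh := DFunLike.congr_fun (MvPolynomial.comp_aeval γ (Polynomial.aeval (0:ℂ))) P
    rwa [AlgHom.comp_apply] at hh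
  have hz : (fun i => (Polynomial.aeval (0:ℂ)) (γ i)) = fun _ => (0:ℂ) := by
    funext i
    rw [coe_aeval_eq_eval, ← coeff_zero_eq_eval_zero, h0]
  rw [coeff_zero_eq_eval_zero, ← coe_aeval_eq_eval (0:ℂ), this, hz,
    MvPolynomial.aeval_zero']
  rfl

lemma aeval_sub_dvd {σ : Type*} (m : ℕ) (γ η : σ → ℂ[X])
    (h : ∀ j, (X:ℂ[X])^m ∣ (η j - γ j)) (P : MvPolynomial σ ℂ) :
    (X:ℂ[X])^m ∣ ((MvPolynomial.aeval η) P - (MvPolynomial.aeval γ) P) := by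
  induction P using MvPolynomial.induction_on with
  | C a => simp
  | add p q hp hq =>
      have : (MvPolynomial.aeval η) (p+q) - (MvPolynomial.aeval γ) (p+q)
        = ((MvPolynomial.aeval η) p - (MvPolynomial.aeval γ) p)
          + ((MvPolynomial.aeval η) q - (MvPolynomial.aeval γ) q) := by
        simp [map_add]; ring
      rw [this]; exact dvd_add hp hq
  | mul_X p j hp =>
      have : (MvPolynomial.aeval η) (p * MvPolynomial.X j)
          - (MvPolynomial.aeval γ) (p * MvPolynomial.X j)
        = ((MvPolynomial.aeval η) p - (MvPolynomial.aeval γ) p) * η j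
          + (MvPolynomial.aeval γ) p * (η j - γ j) := by
        simp [map_mul]; ring
      rw [this]
      exact dvd_add (hp.mul_right _) ((h j).mul_left _)

lemma key_chain {σ : Type*} [Fintype σ] [DecidableEq σ] (m : ℕ) (γ η : σ → ℂ[X])
    (hγ0 : ∀ j, (γ j).coeff 0 = 0) (hη0 : ∀ j, (η j).coeff 0 = 0)
    (h : ∀ j, (X:ℂ[X])^m ∣ (η j - γ j)) (P : MvPolynomial σ ℂ) :
    ((MvPolynomial.aeval η) P).coeff m - ((MvPolynomial.aeval γ) P).coeff m
      = ∑ j, MvPolynomial.coeff (Finsupp.single j 1) P * (η j - γ j).coeff m := by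
  induction P using MvPolynomial.induction_on with
  | C a =>
      rw [Finset.sum_eq_zero fun i _ => ?_]
      · simp
      · rw [MvPolynomial.coeff_C, if_neg (fun hh => one_ne_zero (Finsupp.single_eq_zero.mp hh.symm)), zero_mul]
  | add p q hp hq =>
      simp only [map_add, Polynomial.coeff_add, MvPolynomial.coeff_add, add_mul,
        Finset.sum_add_distrib]
      rw [← hp, ← hq]; ring
  | mul_X p j hp =>
      have expand : (MvPolynomial.aeval η) (p * MvPolynomial.X j)
          - (MvPolynomial.aeval γ) (p * MvPolynomial.X j)
        = η j * ((MvPolynomial.aeval η) p - (MvPolynomial.aeval γ) p)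
          + (MvPolynomial.aeval γ) p * (η j - γ j) := by
        simp [map_mul]; ring
      have h1 : (η j * ((MvPolynomial.aeval η) p - (MvPolynomial.aeval γ) p)).coeff m = 0 := by
        rw [coeff_mul_of_Xpow_dvd _ _ _ (aeval_sub_dvd m γ η h p), hη0, zero_mul]
      have h2 : ((MvPolynomial.aeval γ) p * (η j - γ j)).coeff m
          = MvPolynomial.coeff 0 p * (η j - γ j).coeff m := by
        rw [coeff_mul_of_Xpow_dvd _ _ _ (h j), aeval_coeff_zero γ hγ0]
  
      have lhs : ((MvPolynomial.aeval η) (p * MvPolynomial.X j)).coeff m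
          - ((MvPolynomial.aeval γ) (p * MvPolynomial.X j)).coeff m
          = MvPolynomial.coeff 0 p * (η j - γ j).coeff m := by
        rw [← Polynomial.coeff_sub, expand, Polynomial.coeff_add, h1, h2, zero_add]
      rw [lhs, Finset.sum_eq_single j]
      · congr 1
        rw [MvPolynomial.coeff_mul_X']
        rw [if_pos (by simp)]
        congr 1
        simp
      · intro b _ hb
        rw [MvPolynomial.coeff_mul_X', if_neg (by simp [Finsupp.single_apply_eq_zero, hb.symm]), zero_mul]
      · intro hj; exact absurd (Finset.mem_univ j) hj

lemma comp_sub_dvd (m : ℕ) (p q q' : ℂ[X]) (h : (X:ℂ[X])^m ∣ q' - q) :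
    (X:ℂ[X])^m ∣ (p.comp q' - p.comp q) := by
  induction p using Polynomial.induction_on with
  | C a => simp
  | add p₁ p₂ h₁ h₂ =>
      have : (p₁+p₂).comp q' - (p₁+p₂).comp q
        = (p₁.comp q' - p₁.comp q) + (p₂.comp q' - p₂.comp q) := by
        simp [add_comp]; ring
      rw [this]; exact dvd_add h₁ h₂
  | monomial r a _ =>
      have : (C a * X^(r+1)).comp q' - (C a * X^(r+1)).comp q
          = C a * (q'^(r+1) - q^(r+1)) := by
        simp [mul_comp]; ring
      rw [this]
      exact ((h.trans (sub_dvd_pow_sub_pow q' q (r+1)))).mul_left _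

lemma pow_sub_pow_dvd_succ (m s : ℕ) (q q' : ℂ[X]) (hq : q.coeff 0 = 0)
    (hq' : q'.coeff 0 = 0) (h : (X:ℂ[X])^m ∣ q' - q) :
    (X:ℂ[X])^(m+1) ∣ q'^(s+2) - q^(s+2) := by
  have hXq : (X:ℂ[X]) ∣ q := X_dvd_iff.mpr hq
  have hXq' : (X:ℂ[X]) ∣ q' := X_dvd_iff.mpr hq'
  have expand : q'^(s+2) - q^(s+2)
      = q'^(s+1) * (q' - q) + (q'^(s+1) - q^(s+1)) * q := by ring
  rw [expand]
  refine dvd_add ?_ ?_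
  · have : (X:ℂ[X])^(m+1) = X^1 * X^m := by rw [← pow_add]; ring_nf
    rw [this]
    exact mul_dvd_mul (by simpa using hXq'.pow (Nat.succ_ne_zero s)) h
  · have : (X:ℂ[X])^(m+1) = X^m * X^1 := by rw [← pow_add]
    rw [this]
    exact mul_dvd_mul (h.trans (sub_dvd_pow_sub_pow q' q (s+1))) (by simpa using hXq)

lemma comp_coeff_sub (m : ℕ) (p q q' : ℂ[X]) (hq : q.coeff 0 = 0)
    (hq' : q'.coeff 0 = 0) (h : (X:ℂ[X])^m ∣ q' - q) :
    (p.comp q').coeff m - (p.comp q).coeff m = p.coeff 1 * (q' - q).coeff m := by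
  induction p using Polynomial.induction_on with
  | C a => simp
  | add p₁ p₂ h₁ h₂ =>
      simp only [add_comp, coeff_add]
      rw [show (p₁.comp q').coeff m + (p₂.comp q').coeff m
            - ((p₁.comp q).coeff m + (p₂.comp q).coeff m)
          = ((p₁.comp q').coeff m - (p₁.comp q).coeff m)
            + ((p₂.comp q').coeff m - (p₂.comp q).coeff m) from by ring, h₁, h₂]
      ring
  | monomial r a _ =>
      match r with
      | 0 =>
        simp only [pow_one, mul_comp, C_comp, X_comp, coeff_C_mul, coeff_mul_C,
          mul_one, coeff_C_zero]
        rw [← mul_sub, ← coeff_sub]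
        simp
      | s+1 =>
        have hd : (X:ℂ[X])^(m+1) ∣ q'^(s+2) - q^(s+2) :=
          pow_sub_pow_dvd_succ m s q q' hq hq' h
        have hcm : (q'^(s+2) - q^(s+2)).coeff m = 0 :=
          X_pow_dvd_iff.mp hd m (Nat.lt_succ_self m)
        have lhs : ((C a * X^(s+1+1)).comp q').coeff m
            - ((C a * X^(s+1+1)).comp q).coeff m
            = a * (q'^(s+2) - q^(s+2)).coeff m := by
          simp only [mul_comp, C_comp, X_pow_comp, coeff_C_mul]
          rw [← mul_sub, ← coeff_sub]
        rw [lhs, hcm, mul_zero]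
        have : (C a * X^(s+1+1) : ℂ[X]).coeff 1 = 0 := by
          rw [coeff_C_mul, coeff_X_pow]
          simp
        rw [this, zero_mul]

lemma exists_smul_of_finrank_one {V : Type*} [AddCommGroup V] [Module ℂ V]
    {K : Submodule ℂ V} (h : Module.finrank ℂ K = 1) {w v : V}
    (hw : w ∈ K) (hw0 : w ≠ 0) (hv : v ∈ K) : ∃ μ : ℂ, v = μ • w := by
  have hne : (⟨w, hw⟩ : K) ≠ 0 := fun hh => hw0 (by simpa using congrArg Subtype.val hh)
  have hspan := (finrank_eq_one_iff_of_nonzero (⟨w, hw⟩ : K) hne).mp h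
  have hmem : (⟨v, hv⟩ : K) ∈ Submodule.span ℂ {(⟨w, hw⟩ : K)} := by
    rw [hspan]; trivial
  obtain ⟨μ, hμ⟩ := Submodule.mem_span_singleton.mp hmem
  exact ⟨μ, by simpa using (congrArg Subtype.val hμ).symm⟩

lemma comp_coeff_zero' (p q : Polynomial ℂ) (hp : p.coeff 0 = 0) (hq : q.coeff 0 = 0) :
    (p.comp q).coeff 0 = 0 := by
  rw [coeff_zero_eq_eval_zero, eval_comp, ← coeff_zero_eq_eval_zero q, hq,
    ← coeff_zero_eq_eval_zero, hp]

lemma aeval_comp_eq {n : ℕ} (δ : Fin n → Polynomial ℂ) (Δ : Polynomial ℂ)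
    (P : MvPolynomial (Fin n) ℂ) :
    (MvPolynomial.aeval (fun j => (δ j).comp Δ)) P = ((MvPolynomial.aeval δ) P).comp Δ := by
  have h1 : ∀ p : Polynomial ℂ, Polynomial.aeval Δ p = p.comp Δ := fun p => by
    simp [Polynomial.aeval_def, Polynomial.comp]
  have h2 := DFunLike.congr_fun (MvPolynomial.comp_aeval δ (Polynomial.aeval Δ)) P
  rw [AlgHom.comp_apply] at h2
  simp only [h1] at h2
  exact h2.symm

lemma mem_ker_helper {N n : ℕ} (A : Matrix (Fin N) (Fin n) ℂ) (v : Fin n → ℂ)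
    (h : ∀ i, ∑ j, A i j * v j = 0) : v ∈ LinearMap.ker A.mulVecLin := by
  rw [LinearMap.mem_ker]
  funext i
  simpa [Matrix.mulVecLin_apply, Matrix.mulVec, dotProduct] using h i

/-- One-variable jet uniqueness up to reparametrization: let
`Ψ : (ℂ^n,0) → (ℂ^N,0)` be a polynomial map germ whose linear part `Ψ¹` has
one-dimensional kernel, and let `γ(t) = v₁t + … + v_k t^k`,
`δ(t) = w₁t + … + w_k t^k` be regular curve jets (`v₁ ≠ 0 ≠ w₁`) with
`(Ψ∘γ)_k = (Ψ∘δ)_k = 0`.  Then there is a regular reparametrization jet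
`Δ(t) = c₁t + … + c_k t^k`, `c₁ ≠ 0`, with `γ = δ ∘ Δ` modulo `t^{k+1}`. -/
theorem jet_uniqueness_up_to_reparametrization (n N k : ℕ) (hk : 1 ≤ k)
    (Ψ : Fin N → MvPolynomial (Fin n) ℂ)
    (hΨ0 : ∀ i, MvPolynomial.coeff 0 (Ψ i) = 0)
    (hker : Module.finrank ℂ
        (LinearMap.ker (Matrix.mulVecLin
          (Matrix.of fun i j => MvPolynomial.coeff (Finsupp.single j 1) (Ψ i)))) = 1)
    (γ δ : Fin n → Polynomial ℂ)
    (hγ0 : ∀ j, (γ j).coeff 0 = 0) (hδ0 : ∀ j, (δ j).coeff 0 = 0)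
    (hγreg : (fun j => (γ j).coeff 1) ≠ 0)
    (hδreg : (fun j => (δ j).coeff 1) ≠ 0)
    (hγ : ∀ i, ∀ d, 1 ≤ d → d ≤ k → ((MvPolynomial.aeval γ) (Ψ i)).coeff d = 0)
    (hδ : ∀ i, ∀ d, 1 ≤ d → d ≤ k → ((MvPolynomial.aeval δ) (Ψ i)).coeff d = 0) :
    ∃ Δ : Polynomial ℂ, Δ.coeff 0 = 0 ∧ Δ.coeff 1 ≠ 0 ∧
      ∀ j, ∀ d ≤ k, (γ j).coeff d = ((δ j).comp Δ).coeff d := by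
  set A : Matrix (Fin N) (Fin n) ℂ :=
    Matrix.of fun i j => MvPolynomial.coeff (Finsupp.single j 1) (Ψ i) with hA
  -- derivative-in-kernel helper
  have deriv_ker : ∀ (c : Fin n → Polynomial ℂ), (∀ j, (c j).coeff 0 = 0) →
      (∀ i, ((MvPolynomial.aeval c) (Ψ i)).coeff 1 = 0) →
      (fun j => (c j).coeff 1) ∈ LinearMap.ker A.mulVecLin := by
    intro c hc0 hc1
    apply mem_ker_helper
    intro i
    have hdvd : ∀ j, (X:ℂ[X])^1 ∣ (c j - (fun _ => (0:ℂ[X])) j) := by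
      intro j
      simpa using X_dvd_iff.mpr (hc0 j)
    have hkc := key_chain 1 (fun _ => (0:ℂ[X])) c (fun _ => rfl) hc0 hdvd (Ψ i)
    have hz : ((MvPolynomial.aeval (fun _ => (0:ℂ[X]))) (Ψ i)).coeff 1 = 0 := by
      rw [MvPolynomial.aeval_zero']
      simp [Polynomial.coeff_C]
    rw [hc1 i, hz, sub_zero] at hkc
    simp only [sub_zero] at hkc
    exact hkc.symm
  set w1 : Fin n → ℂ := fun j => (δ j).coeff 1 with hw1
  set v1 : Fin n → ℂ := fun j => (γ j).coeff 1 with hv1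
  have hwker : w1 ∈ LinearMap.ker A.mulVecLin :=
    deriv_ker δ hδ0 (fun i => hδ i 1 le_rfl hk)
  have hvker : v1 ∈ LinearMap.ker A.mulVecLin :=
    deriv_ker γ hγ0 (fun i => hγ i 1 le_rfl hk)
  -- main induction
  have main : ∀ m, 1 ≤ m → m ≤ k → ∃ Δ : Polynomial ℂ, Δ.coeff 0 = 0 ∧ Δ.coeff 1 ≠ 0 ∧
      ∀ j, ∀ d ≤ m, (γ j).coeff d = ((δ j).comp Δ).coeff d := by
    intro m hm1
    induction m, hm1 using Nat.le_induction with
    | base =>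
      intro _
      obtain ⟨lam, hlam⟩ := exists_smul_of_finrank_one hker hwker hδreg hvker
      have hlam0 : lam ≠ 0 := by
        intro h0
        apply hγreg
        rw [hlam, h0, zero_smul]
      refine ⟨C lam * X, by simp, by simpa using hlam0, ?_⟩
      intro j d hd
      interval_cases d
      · rw [hγ0 j, comp_coeff_zero' _ _ (hδ0 j) (by simp)]
      · have hdvd : (X:ℂ[X])^1 ∣ (C lam * X - 0) := by
          simpa using Dvd.intro (C lam) rfl
        have hc := comp_coeff_sub 1 (δ j) 0 (C lam * X) rfl (by simp) hdvd
        rw [comp_zero] at hc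
        simp only [coeff_C, sub_zero] at hc
        have : ((δ j).comp (C lam * X)).coeff 1 = (δ j).coeff 1 * lam := by
          simpa using hc
        rw [this]
        have := congrFun hlam j
        simp only [hv1, hw1, Pi.smul_apply, smul_eq_mul] at this
        rw [this]; ring
    | succ m hm1 IH =>
      intro hmk1
      obtain ⟨Δ, hΔ0, hΔ1, hΔ⟩ := IH (le_trans (Nat.le_succ m) hmk1)
      set η : Fin n → Polynomial ℂ := fun j => (δ j).comp Δ with hη
      have hη0 : ∀ j, (η j).coeff 0 = 0 := fun j => comp_coeff_zero' _ _ (hδ0 j) hΔ0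
      have hηΨ : ∀ i, ∀ d, d ≤ k → ((MvPolynomial.aeval η) (Ψ i)).coeff d = 0 := by
        intro i d hdk
        rw [hη, aeval_comp_eq]
        have hq : (X:ℂ[X])^(k+1) ∣ (MvPolynomial.aeval δ) (Ψ i) := by
          rw [X_pow_dvd_iff]
          intro e he
          rcases Nat.eq_zero_or_pos e with he0 | he1
          · rw [he0, aeval_coeff_zero δ hδ0, hΨ0 i]
          · exact hδ i e he1 (Nat.lt_succ_iff.mp he)
        obtain ⟨r, hr⟩ := hq
        rw [hr, mul_comp, X_pow_comp]
        rw [X_pow_dvd_iff.mp (dvd_trans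
          (pow_dvd_pow_of_dvd (X_dvd_iff.mpr hΔ0) (k+1)) (dvd_mul_right _ _)) d
          (Nat.lt_succ_of_le hdk)]
      have hdvd : ∀ j, (X:ℂ[X])^(m+1) ∣ (η j - γ j) := by
        intro j
        rw [X_pow_dvd_iff]
        intro d hd
        rw [coeff_sub, ← hΔ j d (Nat.lt_succ_iff.mp hd), sub_self]
      set e : Fin n → ℂ := fun j => (η j - γ j).coeff (m+1) with he
      have heker : e ∈ LinearMap.ker A.mulVecLin := by
        apply mem_ker_helper
        intro i
        have hkc := key_chain (m+1) γ η hγ0 hη0 hdvd (Ψ i)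
        rw [hηΨ i (m+1) hmk1, hγ i (m+1) (Nat.le_add_left 1 m) hmk1, sub_zero] at hkc
        exact hkc.symm
      obtain ⟨μ, hμ⟩ := exists_smul_of_finrank_one hker hwker hδreg heker
      set Δ' : Polynomial ℂ := Δ - C μ * X^(m+1) with hΔ'
      have hΔ'0 : Δ'.coeff 0 = 0 := by
        rw [hΔ', coeff_sub, hΔ0, coeff_C_mul, coeff_X_pow, if_neg (by omega)]
        ring
      have hΔ'1 : Δ'.coeff 1 = Δ.coeff 1 := by
        rw [hΔ', coeff_sub, coeff_C_mul, coeff_X_pow, if_neg (by omega)]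
        ring
      have hdiff : (X:ℂ[X])^(m+1) ∣ Δ' - Δ := by
        rw [hΔ', show Δ - C μ * X^(m+1) - Δ = -(X^(m+1) * C μ) from by ring]
        exact (Dvd.intro (C μ) rfl).neg_right
      refine ⟨Δ', hΔ'0, by rw [hΔ'1]; exact hΔ1, ?_⟩
      intro j d hd
      rcases Nat.lt_succ_iff_lt_or_eq.mp (Nat.lt_succ_of_le hd) with hdm | hdm
      · -- d ≤ m
        have h1 : ((δ j).comp Δ').coeff d = ((δ j).comp Δ).coeff d := by
          have := X_pow_dvd_iff.mp (comp_sub_dvd (m+1) (δ j) Δ Δ' hdiff) d hdm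
          rw [coeff_sub] at this
          exact sub_eq_zero.mp this
        rw [h1]
        exact hΔ j d (Nat.lt_succ_iff.mp hdm)
      · -- d = m+1
        subst hdm
        have hc := comp_coeff_sub (m+1) (δ j) Δ Δ' hΔ0 hΔ'0 hdiff
        have hΔ'Δ : (Δ' - Δ).coeff (m+1) = -μ := by
          rw [hΔ', show Δ - C μ * X^(m+1) - Δ = -(C μ * X^(m+1)) from by ring,
            coeff_neg, coeff_C_mul, coeff_X_pow, if_pos rfl]
          ring
        rw [hΔ'Δ] at hc
        have hej : (η j).coeff (m+1) - (γ j).coeff (m+1) = μ * w1 j := by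
          have := congrFun hμ j
          simp only [he, Pi.smul_apply, smul_eq_mul, coeff_sub] at this
          exact this
        have : ((δ j).comp Δ').coeff (m+1)
            = ((δ j).comp Δ).coeff (m+1) + (δ j).coeff 1 * (-μ) := by
          linear_combination hc
        rw [this]
        have hetaΔ : ((δ j).comp Δ).coeff (m+1) = (η j).coeff (m+1) := rfl
        rw [hetaΔ]
        have hw1j : (δ j).coeff 1 = w1 j := rfl
        rw [hw1j]
        linear_combination -hej
  exact main k hk le_rfl
end
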